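/- With the same setup, defining y_n := (α/h_{n-1}) ∫_0^1 P_n(y) P_{n-1}(y) w(y)/y dy and r_n := (β/h_{n-1}) ∫_0^1 P_n(y) P_{n-1}(y) w(y)/(1-y) dy, integration by parts gives (γ/h_{n-1}) ∫_0^1 P_n(y) P_{n-1}(y) w(y)/(y−t) dy = r_n − y_n − n. -/

import Mathlib

/-!
Integrate the derivative of `P_n P_{n-1} w` over `[0, 1]`. The boundary terms vanish because
`α, β > 0`, and `w` is continuous because `|x - t|^γ` kills the jump of `A + B θ(x - t)`. Away
from `t` the logarithmic derivative of `w` is `α/x - β/(1-x) + γ/(x-t)`, and these three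
singular integrands are integrable since `w` vanishes to order `α`, `β`, `γ` at `0`, `1`, `t`.
Finally `∫ (P_n P_{n-1})' w = n h_{n-1}` by orthogonality: `P_{n-1}'` has degree `< n`, and
`P_n' - n P_{n-1}` has degree `< n - 1`.
-/

open MeasureTheory Polynomial Set
open scoped Interval

lemma intervalIntegrable_abs_rpow {r : ℝ} (hr : -1 < r) (a b : ℝ) :
    IntervalIntegrable (fun x => |x| ^ r) volume a b := by
  have hpos : ∀ c, 0 ≤ c → IntervalIntegrable (fun x => |x| ^ r) volume 0 c := fun c hc =>
    (intervalIntegral.intervalIntegrable_rpow' hr).congr fun x hx => by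
      rw [uIoc_of_le hc] at hx
      simp only [abs_of_pos hx.1]
  have hzero : ∀ c, IntervalIntegrable (fun x => |x| ^ r) volume 0 c := by
    intro c
    rcases le_total 0 c with hc | hc
    · exact hpos c hc
    · simpa using (hpos (-c) (neg_nonneg.2 hc)).comp_sub_left 0
  exact (hzero a).symm.trans (hzero b)

lemma intervalIntegrable_abs_sub_rpow {r : ℝ} (hr : -1 < r) (a b c : ℝ) :
    IntervalIntegrable (fun x => |x - c| ^ r) volume a b := by
  simpa using (intervalIntegrable_abs_rpow hr (a - c) (b - c)).comp_sub_right c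

lemma intervalIntegrable_div_sub_of_abs_le {f : ℝ → ℝ} {a b c C s : ℝ} (hs : 0 < s)
    (hf : AEStronglyMeasurable f (volume.restrict (Ι a b)))
    (hle : ∀ x ∈ Ι a b, |f x| ≤ C * |x - c| ^ s) :
    IntervalIntegrable (fun x => f x / (x - c)) volume a b := by
  refine ((intervalIntegrable_abs_sub_rpow (r := s - 1) (by linarith) a b c).const_mul C).mono_fun'
    (hf.div₀ (by fun_prop : Measurable fun x : ℝ => x - c).aestronglyMeasurable) ?_
  have hne : ∀ᵐ x ∂(volume.restrict (Ι a b)), x ≠ c :=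
    ae_restrict_of_ae (Measure.ae_ne volume c)
  filter_upwards [hne, ae_restrict_mem measurableSet_uIoc] with x hxc hx
  have hpos : 0 < |x - c| := abs_pos.2 (sub_ne_zero.2 hxc)
  rw [Real.norm_eq_abs, abs_div, Real.rpow_sub_one hpos.ne', ← mul_div_assoc]
  exact div_le_div_of_nonneg_right (hle x hx) hpos.le

lemma intervalIntegrable_mul_div_sub_of_abs_le {g f : ℝ → ℝ} {a b c K s : ℝ} (hs : 0 < s)
    (hg : Continuous g) (hf : Measurable f) (hle : ∀ x ∈ [[a, b]], |f x| ≤ K * |x - c| ^ s) :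
    IntervalIntegrable (fun x => g x * f x / (x - c)) volume a b := by
  obtain ⟨M, hM⟩ := isCompact_uIcc.exists_bound_of_continuousOn hg.continuousOn
  refine intervalIntegrable_div_sub_of_abs_le (C := M * K) hs
    (hg.measurable.mul hf).aestronglyMeasurable fun x hx => ?_
  have hx' := uIoc_subset_uIcc hx
  rw [abs_mul, mul_assoc]
  exact mul_le_mul (hM x hx') (hle x hx') (abs_nonneg _) ((norm_nonneg _).trans (hM x hx'))

lemma HasDerivAt.mul_logDeriv {f g : ℝ → ℝ} {a b x : ℝ} (hf : HasDerivAt f (f x * a) x)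
    (hg : HasDerivAt g (g x * b) x) :
    HasDerivAt (fun y => f y * g y) (f x * g x * (a + b)) x := by
  refine (hf.mul hg).congr_deriv ?_
  ring

lemma HasDerivAt.rpow_const_logDeriv {u : ℝ → ℝ} {u' x : ℝ} (p : ℝ)
    (hu : HasDerivAt u u' x) (hx : u x ≠ 0) :
    HasDerivAt (fun y => u y ^ p) (u x ^ p * (p * u' / u x)) x := by
  convert hu.rpow_const (p := p) (Or.inl hx) using 1
  rw [Real.rpow_sub_one hx]
  ring

lemma hasDerivAt_abs_sub_rpow {t x : ℝ} (γ : ℝ) (hxt : x ≠ t) :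
    HasDerivAt (fun y => |y - t| ^ γ) (|x - t| ^ γ * (γ / (x - t))) x := by
  have hx : x - t ≠ 0 := sub_ne_zero.2 hxt
  have habs : HasDerivAt (fun y => |y - t|) (SignType.sign (x - t) : ℝ) x :=
    (hasDerivAt_abs hx).comp_sub_const x t
  refine (habs.rpow_const_logDeriv γ (abs_ne_zero.2 hx)).congr_deriv ?_
  rcases hx.lt_or_gt with h | h
  · rw [abs_of_neg h, sign_neg h, ← neg_sub t x]
    field_simp
    simp
  · simp [abs_of_pos h, sign_pos h]

lemma hasDerivAt_step {A B t x : ℝ} (hxt : x ≠ t) :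
    HasDerivAt (fun y => A + B * if t < y then (1 : ℝ) else 0) 0 x := by
  refine (hasDerivAt_const x (A + B * if t < x then (1 : ℝ) else 0)).congr_of_eventuallyEq ?_
  rcases hxt.lt_or_gt with h | h
  · filter_upwards [Iio_mem_nhds h] with y hy
    simp [not_lt.2 (mem_Iio.1 hy).le, not_lt.2 h.le]
  · filter_upwards [Ioi_mem_nhds h] with y hy
    simp [mem_Ioi.1 hy, h]

noncomputable def jumpJacobiWeight (α β γ A B t x : ℝ) : ℝ :=
  x ^ α * (1 - x) ^ β * |x - t| ^ γ * (A + B * (if t < x then (1 : ℝ) else 0))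

section jumpJacobiWeight

variable {α β γ A B t : ℝ}

lemma jumpJacobiWeight_eq_max (hγ : γ ≠ 0) (x : ℝ) :
    jumpJacobiWeight α β γ A B t x =
      x ^ α * (1 - x) ^ β * (A * |x - t| ^ γ + B * max (x - t) 0 ^ γ) := by
  unfold jumpJacobiWeight
  split_ifs with h
  · rw [max_eq_left (sub_nonneg.2 h.le), abs_of_pos (sub_pos.2 h)]
    ring
  · rw [max_eq_right (sub_nonpos.2 (not_lt.1 h)), Real.zero_rpow hγ]
    ring

lemma continuous_jumpJacobiWeight (hα : 0 ≤ α) (hβ : 0 ≤ β) (hγ : 0 < γ) :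
    Continuous (jumpJacobiWeight α β γ A B t) := by
  rw [funext (jumpJacobiWeight_eq_max hγ.ne')]
  fun_prop (disch := positivity)

lemma jumpJacobiWeight_zero (hα : α ≠ 0) : jumpJacobiWeight α β γ A B t 0 = 0 := by
  simp [jumpJacobiWeight, Real.zero_rpow hα]

lemma jumpJacobiWeight_one (hβ : β ≠ 0) : jumpJacobiWeight α β γ A B t 1 = 0 := by
  simp [jumpJacobiWeight, Real.zero_rpow hβ]

lemma hasDerivAt_jumpJacobiWeight {x : ℝ} (hx : x ∈ Ioo 0 1) (hxt : x ≠ t) :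
    HasDerivAt (jumpJacobiWeight α β γ A B t)
      (jumpJacobiWeight α β γ A B t x * (α / x - β / (1 - x) + γ / (x - t))) x := by
  have hx0 : x ≠ 0 := hx.1.ne'
  have hx1 : 1 - x ≠ 0 := (sub_pos.2 hx.2).ne'
  have h := ((((hasDerivAt_id x).rpow_const_logDeriv α hx0).mul_logDeriv
    (((hasDerivAt_id x).const_sub 1).rpow_const_logDeriv β hx1)).mul_logDeriv
    (hasDerivAt_abs_sub_rpow γ hxt)).mul_logDeriv
    ((hasDerivAt_step (A := A) (B := B) hxt).congr_deriv (mul_zero _).symm)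
  refine h.congr_deriv ?_
  simp only [jumpJacobiWeight, id]
  ring

lemma measurable_jumpJacobiWeight : Measurable (jumpJacobiWeight α β γ A B t) := by
  unfold jumpJacobiWeight
  exact (by fun_prop : Measurable fun x : ℝ => x ^ α * (1 - x) ^ β * |x - t| ^ γ).mul
    (measurable_const.add (measurable_const.mul
      (Measurable.ite measurableSet_Ioi measurable_const measurable_const)))

lemma abs_jumpJacobiWeight_le (hα : 0 ≤ α) (hβ : 0 ≤ β) (hγ : 0 ≤ γ)
    (ht : t ∈ Icc 0 1) {x : ℝ} (hx : x ∈ Icc 0 1) :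
    |jumpJacobiWeight α β γ A B t x| ≤ (|A| + |B|) * |x - 0| ^ α ∧
      |jumpJacobiWeight α β γ A B t x| ≤ (|A| + |B|) * |x - 1| ^ β ∧
      |jumpJacobiWeight α β γ A B t x| ≤ (|A| + |B|) * |x - t| ^ γ := by
  obtain ⟨hx0, hx1⟩ := hx
  have h1x : 0 ≤ 1 - x := sub_nonneg.2 hx1
  have hxt : |x - t| ≤ 1 := abs_sub_le_iff.2 ⟨by linarith [ht.1], by linarith [ht.2]⟩
  have h0 : x ^ α ∈ Icc 0 1 := ⟨Real.rpow_nonneg hx0 α, Real.rpow_le_one hx0 hx1 hα⟩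
  have h1 : (1 - x) ^ β ∈ Icc 0 1 :=
    ⟨Real.rpow_nonneg h1x β, Real.rpow_le_one h1x (by linarith) hβ⟩
  have h2 : |x - t| ^ γ ∈ Icc 0 1 := ⟨by positivity, Real.rpow_le_one (abs_nonneg _) hxt hγ⟩
  have hstep : |A + B * (if t < x then (1 : ℝ) else 0)| ≤ |A| + |B| := by
    split_ifs <;> simp [abs_add_le]
  have hJ : 0 ≤ x ^ α * (1 - x) ^ β * |x - t| ^ γ := mul_nonneg (mul_nonneg h0.1 h1.1) h2.1
  have hw : |jumpJacobiWeight α β γ A B t x| ≤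
      (|A| + |B|) * (x ^ α * (1 - x) ^ β * |x - t| ^ γ) := by
    rw [jumpJacobiWeight, abs_mul, abs_of_nonneg hJ, mul_comm]
    exact mul_le_mul_of_nonneg_right hstep hJ
  rw [sub_zero, abs_of_nonneg hx0, abs_sub_comm, abs_of_nonneg h1x]
  refine ⟨hw.trans ?_, hw.trans ?_, hw.trans ?_⟩ <;> gcongr ?_ * ?_ <;>
    nlinarith [mul_nonneg h0.1 h1.1, mul_nonneg h1.1 h2.1, mul_nonneg h0.1 h2.1,
      h0.1, h0.2, h1.1, h1.2, h2.1, h2.2]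

lemma intervalIntegrable_mul_jumpJacobiWeight_div (hα : 0 < α) (hβ : 0 < β) (hγ : 0 < γ)
    (ht : t ∈ Icc 0 1) {g : ℝ → ℝ} (hg : Continuous g) :
    IntervalIntegrable (fun x => g x * jumpJacobiWeight α β γ A B t x / x) volume 0 1 ∧
      IntervalIntegrable (fun x => g x * jumpJacobiWeight α β γ A B t x / (1 - x)) volume 0 1 ∧
      IntervalIntegrable (fun x => g x * jumpJacobiWeight α β γ A B t x / (x - t))
        volume 0 1 := by
  have hle : ∀ x ∈ [[(0 : ℝ), 1]], _ := fun x hx =>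
    abs_jumpJacobiWeight_le (A := A) (B := B) hα.le hβ.le hγ.le ht
      (by rwa [uIcc_of_le zero_le_one] at hx)
  refine ⟨?_, ?_, intervalIntegrable_mul_div_sub_of_abs_le hγ hg
    measurable_jumpJacobiWeight fun x hx => (hle x hx).2.2⟩
  · simpa using intervalIntegrable_mul_div_sub_of_abs_le hα hg
      measurable_jumpJacobiWeight fun x hx => (hle x hx).1
  · refine (intervalIntegrable_mul_div_sub_of_abs_le hβ hg
      measurable_jumpJacobiWeight fun x hx => (hle x hx).2.1).neg.congr fun x _ => ?_
    rw [Pi.neg_apply, ← div_neg, neg_sub]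

theorem integral_derivative_mul_jumpJacobiWeight (hα : 0 < α) (hβ : 0 < β) (hγ : 0 < γ)
    (ht : t ∈ Ioo 0 1) (p : ℝ[X]) :
    ∫ x in (0 : ℝ)..1, (derivative p).eval x * jumpJacobiWeight α β γ A B t x =
      β * (∫ x in (0 : ℝ)..1, p.eval x * jumpJacobiWeight α β γ A B t x / (1 - x))
        - α * (∫ x in (0 : ℝ)..1, p.eval x * jumpJacobiWeight α β γ A B t x / x)
        - γ * ∫ x in (0 : ℝ)..1, p.eval x * jumpJacobiWeight α β γ A B t x / (x - t) := by
  set w := jumpJacobiWeight α β γ A B t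
  have hw : Continuous w := continuous_jumpJacobiWeight hα.le hβ.le hγ
  obtain ⟨hi0, hi1, hit⟩ := intervalIntegrable_mul_jumpJacobiWeight_div (A := A) (B := B)
    hα hβ hγ (Ioo_subset_Icc_self ht) p.continuous
  have hderiv : ∀ x ∈ Ioo (0 : ℝ) 1 \ {t}, HasDerivAt (fun x => p.eval x * w x)
      ((derivative p).eval x * w x + (α * (p.eval x * w x / x)
        - β * (p.eval x * w x / (1 - x)) + γ * (p.eval x * w x / (x - t)))) x := fun x hx =>
    ((p.hasDerivAt x).mul (hasDerivAt_jumpJacobiWeight hx.1 hx.2)).congr_deriv (by ring)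
  have hid : IntervalIntegrable (fun x => (derivative p).eval x * w x) volume 0 1 :=
    (p.derivative.continuous.mul hw).intervalIntegrable 0 1
  have hi' := ((hi0.const_mul α).sub (hi1.const_mul β)).add (hit.const_mul γ)
  have hFTC := integral_eq_of_hasDerivAt_off_countable_of_le _ _ zero_le_one
    (countable_singleton t) (p.continuous.mul hw).continuousOn hderiv (hid.add hi')
  rw [intervalIntegral.integral_add hid hi', Pi.mul_apply, Pi.mul_apply,
    intervalIntegral.integral_add ((hi0.const_mul α).sub (hi1.const_mul β)) (hit.const_mul γ),
    intervalIntegral.integral_sub (hi0.const_mul α) (hi1.const_mul β),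
    intervalIntegral.integral_const_mul, intervalIntegral.integral_const_mul,
    intervalIntegral.integral_const_mul, show w 0 = 0 from jumpJacobiWeight_zero hα.ne',
    show w 1 = 0 from jumpJacobiWeight_one hβ.ne'] at hFTC
  linarith

end jumpJacobiWeight

section Orthogonal

variable {a b : ℝ} {w : ℝ → ℝ} {P : ℕ → ℝ[X]} {h : ℕ → ℝ}

lemma integral_eval_C_mul_add_mul {g : ℝ → ℝ} (hw : ContinuousOn w [[a, b]])
    (hg : ContinuousOn g [[a, b]]) (c : ℝ) (p r : ℝ[X]) :
    ∫ x in a..b, (C c * p + r).eval x * g x * w x =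
      c * (∫ x in a..b, p.eval x * g x * w x) + ∫ x in a..b, r.eval x * g x * w x := by
  have hint : ∀ q : ℝ[X], IntervalIntegrable (fun x => q.eval x * g x * w x) volume a b :=
    fun q => ((q.continuous.continuousOn.mul hg).mul hw).intervalIntegrable
  rw [← intervalIntegral.integral_const_mul, ← intervalIntegral.integral_add
    ((hint p).const_mul c) (hint r)]
  refine intervalIntegral.integral_congr fun x _ => ?_
  simp only [eval_add, eval_mul, eval_C]
  ring

variable (hw : ContinuousOn w [[a, b]]) (hmonic : ∀ n, (P n).Monic)
  (hdeg : ∀ n, (P n).natDegree = n)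
  (horth : ∀ m n, ∫ x in a..b, (P m).eval x * (P n).eval x * w x = if m = n then h n else 0)
include hw hmonic hdeg horth

lemma integral_eval_mul_eval_mul_eq_zero_of_degree_lt {m : ℕ} {q : ℝ[X]} (hq : q.degree < m) :
    ∫ x in a..b, q.eval x * (P m).eval x * w x = 0 := by
  induction hk : q.natDegree using Nat.strong_induction_on generalizing q with
  | _ k ih =>
  by_cases hq0 : q = 0
  · simp [hq0]
  have hPk : (P k).degree = k := by rw [degree_eq_natDegree (hmonic k).ne_zero, hdeg]
  have hkm : k ≠ m := by
    rintro rfl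
    exact (degree_eq_natDegree hq0 ▸ hk ▸ hq).false
  set r := q - C q.leadingCoeff * P k
  have hr : r.degree < q.degree := degree_sub_lt_left
    (by rw [degree_C_mul (leadingCoeff_ne_zero.2 hq0), hPk, degree_eq_natDegree hq0, hk]) hq0
    (by rw [leadingCoeff_mul, leadingCoeff_C, (hmonic k).leadingCoeff, mul_one])
  have hr0 : ∫ x in a..b, r.eval x * (P m).eval x * w x = 0 := by
    by_cases hr0 : r = 0
    · simp [hr0]
    exact ih _ (hk ▸ natDegree_lt_natDegree hr0 hr) (hr.trans hq) rfl
  rw [show q = C q.leadingCoeff * P k + r by ring, integral_eval_C_mul_add_mul hw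
    (P m).continuous.continuousOn, horth, if_neg hkm, hr0, mul_zero, add_zero]

lemma integral_derivative_eval_mul_eval_mul (m : ℕ) :
    ∫ x in a..b, (derivative (P (m + 1))).eval x * (P m).eval x * w x = (m + 1) * h m := by
  have hm : ((m + 1 : ℕ) : ℝ) ≠ 0 := Nat.cast_ne_zero.2 m.succ_ne_zero
  have hder : (derivative (P (m + 1))).degree = m := by
    rw [degree_derivative (by rw [hdeg]; exact m.succ_ne_zero), hdeg, Nat.add_sub_cancel]
  set r := derivative (P (m + 1)) - C ((m + 1 : ℕ) : ℝ) * P m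
  have hr : r.degree < m := hder ▸ degree_sub_lt_left
    (by rw [hder, degree_C_mul hm, degree_eq_natDegree (hmonic m).ne_zero, hdeg])
    (by rw [ne_eq, ← degree_eq_bot, hder]; exact WithBot.coe_ne_bot)
    (by rw [leadingCoeff_derivative, leadingCoeff_mul, leadingCoeff_C, (hmonic _).leadingCoeff,
      (hmonic _).leadingCoeff, hdeg, one_mul, mul_one])
  rw [show derivative (P (m + 1)) = C ((m + 1 : ℕ) : ℝ) * P m + r by ring,
    integral_eval_C_mul_add_mul hw (P m).continuous.continuousOn, horth, if_pos rfl,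
    integral_eval_mul_eval_mul_eq_zero_of_degree_lt hw hmonic hdeg horth hr]
  push_cast
  ring

lemma integral_eval_mul_derivative_eval_mul (m : ℕ) :
    ∫ x in a..b, (P (m + 1)).eval x * (derivative (P m)).eval x * w x = 0 := by
  have hlt : (derivative (P m)).degree < (m + 1 : ℕ) := by
    calc (derivative (P m)).degree < (P m).degree := degree_derivative_lt (hmonic m).ne_zero
      _ = m := by rw [degree_eq_natDegree (hmonic m).ne_zero, hdeg]
      _ < (m + 1 : ℕ) := by exact_mod_cast m.lt_succ_self
  simp_rw [mul_comm ((P (m + 1)).eval _)]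
  exact integral_eval_mul_eval_mul_eq_zero_of_degree_lt hw hmonic hdeg horth hlt

lemma integral_derivative_mul_eval_mul (m : ℕ) :
    ∫ x in a..b, (derivative (P (m + 1) * P m)).eval x * w x = (m + 1) * h m := by
  have hint : ∀ p q : ℝ[X],
      IntervalIntegrable (fun x => p.eval x * q.eval x * w x) volume a b :=
    fun p q => ((p.continuous.continuousOn.mul q.continuous.continuousOn).mul hw).intervalIntegrable
  simp only [derivative_mul, eval_add, eval_mul, add_mul]
  rw [intervalIntegral.integral_add (hint _ _) (hint _ _),
    integral_derivative_eval_mul_eval_mul hw hmonic hdeg horth,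
    integral_eval_mul_derivative_eval_mul hw hmonic hdeg horth]
  ring

end Orthogonal

theorem ibp_Pn_Pnm1_general (α β γ A B t : ℝ)
    (hα : 0 < α) (hβ : 0 < β) (hγ : 0 < γ)
    (ht : t ∈ Set.Ioo (0 : ℝ) 1)
    (w : ℝ → ℝ)
    (hw : ∀ x, w x = x ^ α * (1 - x) ^ β * |x - t| ^ γ *
      (A + B * (if t < x then (1 : ℝ) else 0)))
    (P : ℕ → Polynomial ℝ) (h : ℕ → ℝ)
    (hmonic : ∀ n, (P n).Monic)
    (hdeg : ∀ n, (P n).natDegree = n)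
    (horth : ∀ m n, ∫ x in (0 : ℝ)..1, (P m).eval x * (P n).eval x * w x
      = if m = n then h n else 0)
    (hpos : ∀ n, 0 < h n)
    (n : ℕ) (hn : 1 ≤ n) :
    (γ / h (n - 1)) *
        ∫ y in (0 : ℝ)..1, (P n).eval y * (P (n - 1)).eval y * w y / (y - t)
      = (β / h (n - 1)) *
          (∫ y in (0 : ℝ)..1, (P n).eval y * (P (n - 1)).eval y * w y / (1 - y))
        - (α / h (n - 1)) *
          (∫ y in (0 : ℝ)..1, (P n).eval y * (P (n - 1)).eval y * w y / y)
        - n := by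
  obtain ⟨m, rfl⟩ := Nat.exists_eq_add_of_le' hn
  obtain rfl : w = jumpJacobiWeight α β γ A B t := funext hw
  have hibp := integral_derivative_mul_jumpJacobiWeight (A := A) (B := B) hα hβ hγ ht
    (P (m + 1) * P m)
  rw [integral_derivative_mul_eval_mul (continuous_jumpJacobiWeight hα.le hβ.le hγ).continuousOn
    hmonic hdeg horth] at hibp
  simp only [eval_mul, Nat.add_sub_cancel] at hibp ⊢
  have hm := (hpos m).ne'
  field_simp
  push_cast
  linear_combination hibp

/-- Integration by parts for the mixed integral:
`(γ/h_{n-1}) ∫ P_n P_{n-1} w/(y−t) = r_n − y_n − n`. -/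
theorem ibp_Pn_Pnm1 (α β γ A B t : ℝ)
    (hα : 0 < α) (hβ : 0 < β) (hγ : 0 < γ)
    (hA : 0 ≤ A) (hAB : 0 ≤ A + B) (ht : t ∈ Set.Ioo (0 : ℝ) 1)
    (w : ℝ → ℝ)
    (hw : ∀ x, w x = x ^ α * (1 - x) ^ β * |x - t| ^ γ *
      (A + B * (if t < x then (1 : ℝ) else 0)))
    (P : ℕ → Polynomial ℝ) (h : ℕ → ℝ)
    (hmonic : ∀ n, (P n).Monic)
    (hdeg : ∀ n, (P n).natDegree = n)
    (horth : ∀ m n, ∫ x in (0 : ℝ)..1, (P m).eval x * (P n).eval x * w x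
      = if m = n then h n else 0)
    (hpos : ∀ n, 0 < h n)
    (n : ℕ) (hn : 1 ≤ n) :
    (γ / h (n - 1)) *
        ∫ y in (0 : ℝ)..1, (P n).eval y * (P (n - 1)).eval y * w y / (y - t)
      = (β / h (n - 1)) *
          (∫ y in (0 : ℝ)..1, (P n).eval y * (P (n - 1)).eval y * w y / (1 - y))
        - (α / h (n - 1)) *
          (∫ y in (0 : ℝ)..1, (P n).eval y * (P (n - 1)).eval y * w y / y)
        - n :=
  ibp_Pn_Pnm1_general α β γ A B t hα hβ hγ ht w hw P h hmonic hdeg horth hpos n hn
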